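/- arXiv:1809.07966 — 4 statements merged into one kernel-verified Lean document; each statement's English description precedes it below -/
import Mathlib

section
/- Assume g satisfies conditions (A1)–(A4). Then for all w > 0, 1/( max(1,c₃)·(1+g(w)) ) ≤ (1−F(w))/p(w) ≤ min( 1/g(w), 1/c₁ ), and for all w < 0, F(w)/p(w) ≤ min( 1/|g(w)|, 1/c₁ ). -/
open MeasureTheory Real

/-- Conditions (A1)–(A4) on the function `g`. -/
structure GCond (g : ℝ → ℝ) (c₂ c₃ : ℝ) : Prop where
  diff : Differentiable ℝ g
  mono : Monotone g
  zero : g 0 = 0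
  sign : ∀ y : ℝ, y ≠ 0 → 0 < y * g y
  c₂pos : 0 < c₂
  subadd : ∀ x y : ℝ, |g (x + y)| ≤ c₂ * (|g x| + |g y| + 1)
  c₃ge : 1 ≤ c₃
  derivBound : ∀ y : ℝ, |deriv g y| ≤ c₃ * (1 + |g y|) / (1 + |y|)

/-- `G(y) = ∫₀^y g`. -/
noncomputable def Gfun (g : ℝ → ℝ) (y : ℝ) : ℝ := ∫ t in (0:ℝ)..y, g t

/-- The density `p(y) = c₁ e^{-G(y)}`. -/
noncomputable def pfun (g : ℝ → ℝ) (c₁ y : ℝ) : ℝ := c₁ * Real.exp (-(Gfun g y))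

/-- The distribution function `F(w) = ∫_{-∞}^w p`. -/
noncomputable def Ffun (g : ℝ → ℝ) (c₁ w : ℝ) : ℝ := ∫ y in Set.Iic w, pfun g c₁ y

/-!
Write `T(w) = ∫_w^∞ p = 1 - F(w)` and use `p' = -g p`. For `w > 0` with `g(w) > 0`, monotonicity
of `g` gives `g(w) T(w) ≤ ∫_w^∞ g p = p(w)`. If moreover `g(w) < c₁`, then `g ≤ c₁` on `[0, w]`, so
`c₁ - p(w) = p(0) - p(w) = ∫_0^w g p ≤ c₁ ∫_0^w p = c₁ (T(0) - T(w)) ≤ c₁ (1 - T(w))`, i.e.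
`c₁ T(w) ≤ p(w)`; when `g(w) ≥ c₁` this already follows from the first bound.
For the lower bound, (A4) makes the derivative of `-p / (c₃ (1 + g))` at most `p` on `(w, ∞)`, and
integrating gives `p(w) / (c₃ (1 + g(w))) ≤ T(w)`.
The case `w < 0` is the case `w > 0` for the reflected function `y ↦ -g(-y)`, whose density is
`y ↦ p(-y)`.
-/

open Set Filter Topology

section Density

variable {g : ℝ → ℝ} {c₁ : ℝ}

theorem hasDerivAt_Gfun (hg : Continuous g) (y : ℝ) : HasDerivAt (Gfun g) (g y) y :=
  intervalIntegral.integral_hasDerivAt_right (hg.intervalIntegrable _ _)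
    (hg.stronglyMeasurableAtFilter _ _) hg.continuousAt

theorem hasDerivAt_pfun (hg : Continuous g) (c₁ y : ℝ) :
    HasDerivAt (pfun g c₁) (-(g y) * pfun g c₁ y) y :=
  (((hasDerivAt_Gfun hg y).neg.exp).const_mul c₁).congr_deriv
    (by simp only [pfun, Pi.neg_apply]; ring)

theorem hasDerivAt_neg_pfun (hg : Continuous g) (c₁ y : ℝ) :
    HasDerivAt (fun y => -pfun g c₁ y) (g y * pfun g c₁ y) y :=
  (hasDerivAt_pfun hg c₁ y).neg.congr_deriv (by ring)

theorem continuous_pfun (hg : Continuous g) (c₁ : ℝ) : Continuous (pfun g c₁) :=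
  continuous_iff_continuousAt.2 fun y => (hasDerivAt_pfun hg c₁ y).continuousAt

theorem pfun_nonneg (hc₁ : 0 ≤ c₁) (y : ℝ) : 0 ≤ pfun g c₁ y :=
  mul_nonneg hc₁ (exp_pos _).le

theorem pfun_pos (hc₁ : 0 < c₁) (y : ℝ) : 0 < pfun g c₁ y :=
  mul_pos hc₁ (exp_pos _)

theorem pfun_zero : pfun g c₁ 0 = c₁ := by
  simp [pfun, Gfun]

variable (hg : Continuous g) (hmono : Monotone g)
include hg hmono

theorem mul_sub_le_Gfun_sub {a y : ℝ} (h : a ≤ y) : g a * (y - a) ≤ Gfun g y - Gfun g a := by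
  rw [Gfun, Gfun, intervalIntegral.integral_interval_sub_left (hg.intervalIntegrable _ _)
    (hg.intervalIntegrable _ _)]
  calc g a * (y - a) = ∫ _ in a..y, g a := by simp [mul_comm]
    _ ≤ ∫ t in a..y, g t := intervalIntegral.integral_mono_on h intervalIntegrable_const
          (hg.intervalIntegrable _ _) fun t ht => hmono ht.1

theorem tendsto_Gfun_atTop {a : ℝ} (ha : 0 < g a) : Tendsto (Gfun g) atTop atTop := by
  refine tendsto_atTop_mono' atTop ?_ (tendsto_atTop_add_const_left _ (Gfun g a)
    ((tendsto_atTop_add_const_right _ (-a) tendsto_id).const_mul_atTop ha))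
  filter_upwards [eventually_ge_atTop a] with y hy
  simp only [id]
  linarith [mul_sub_le_Gfun_sub hg hmono hy]

theorem tendsto_pfun_atTop {a : ℝ} (ha : 0 < g a) : Tendsto (pfun g c₁) atTop (𝓝 0) := by
  have h := (tendsto_exp_atBot.comp
    (tendsto_neg_atTop_atBot.comp (tendsto_Gfun_atTop hg hmono ha))).const_mul c₁
  rw [mul_zero] at h
  exact h

end Density

section Tail

variable {g : ℝ → ℝ} {c₁ : ℝ} (hg : Continuous g) (hmono : Monotone g) (hc₁ : 0 ≤ c₁)
include hg hmono hc₁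

theorem integrableOn_Ioi_mul_pfun {a : ℝ} (ha : 0 < g a) :
    IntegrableOn (fun y => g y * pfun g c₁ y) (Ioi a) :=
  integrableOn_Ioi_deriv_of_nonneg' (g := fun y => -pfun g c₁ y) (l := 0)
    (fun y _ => hasDerivAt_neg_pfun hg c₁ y)
    (fun y hy => mul_nonneg (ha.le.trans (hmono hy.out.le)) (pfun_nonneg hc₁ y))
    (by simpa using (tendsto_pfun_atTop hg hmono ha).neg)

theorem integral_Ioi_mul_pfun {a : ℝ} (ha : 0 < g a) :
    ∫ y in Ioi a, g y * pfun g c₁ y = pfun g c₁ a := by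
  simpa using integral_Ioi_of_hasDerivAt_of_nonneg' (g := fun y => -pfun g c₁ y) (l := 0)
    (fun y _ => hasDerivAt_neg_pfun hg c₁ y)
    (fun y hy => mul_nonneg (ha.le.trans (hmono hy.out.le)) (pfun_nonneg hc₁ y))
    (by simpa using (tendsto_pfun_atTop hg hmono ha).neg)

theorem integrableOn_Ioi_pfun {a : ℝ} (ha : 0 < g a) : IntegrableOn (pfun g c₁) (Ioi a) := by
  refine ((integrableOn_Ioi_mul_pfun hg hmono hc₁ ha).div_const (g a)).mono'
    (continuous_pfun hg c₁).aestronglyMeasurable ((ae_restrict_iff' measurableSet_Ioi).2 ?_)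
  refine Eventually.of_forall fun y hy => ?_
  rw [norm_of_nonneg (pfun_nonneg hc₁ y), le_div_iff₀ ha, mul_comm]
  exact mul_le_mul_of_nonneg_right (hmono (le_of_lt hy)) (pfun_nonneg hc₁ y)

theorem mul_integral_Ioi_pfun_le {w : ℝ} (hgw : 0 < g w) :
    g w * ∫ y in Ioi w, pfun g c₁ y ≤ pfun g c₁ w := by
  rw [← integral_Ioi_mul_pfun hg hmono hc₁ hgw, ← integral_const_mul]
  exact setIntegral_mono_on ((integrableOn_Ioi_pfun hg hmono hc₁ hgw).const_mul _)
    (integrableOn_Ioi_mul_pfun hg hmono hc₁ hgw) measurableSet_Ioi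
    fun y hy => mul_le_mul_of_nonneg_right (hmono (le_of_lt hy)) (pfun_nonneg hc₁ y)

theorem const_mul_integral_Ioi_pfun_le (h₀ : ∫ y in Ioi 0, pfun g c₁ y ≤ 1) {w : ℝ}
    (hw : 0 ≤ w) (hgw : 0 < g w) : c₁ * ∫ y in Ioi w, pfun g c₁ y ≤ pfun g c₁ w := by
  have hT : 0 ≤ ∫ y in Ioi w, pfun g c₁ y :=
    setIntegral_nonneg measurableSet_Ioi fun y _ => pfun_nonneg hc₁ y
  rcases le_or_gt c₁ (g w) with hle | hlt
  · exact (mul_le_mul_of_nonneg_right hle hT).trans (mul_integral_Ioi_pfun_le hg hmono hc₁ hgw)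
  have hcont := continuous_pfun hg c₁
  have hftc : ∫ y in (0)..w, g y * pfun g c₁ y = pfun g c₁ 0 - pfun g c₁ w := by
    have := intervalIntegral.integral_eq_sub_of_hasDerivAt (f := fun y => -pfun g c₁ y)
      (fun y _ => hasDerivAt_neg_pfun hg c₁ y)
      ((hg.mul hcont).intervalIntegrable 0 w)
    linarith
  have hmid : ∫ y in (0)..w, g y * pfun g c₁ y ≤ c₁ * ∫ y in (0)..w, pfun g c₁ y := by
    rw [← intervalIntegral.integral_const_mul]
    exact intervalIntegral.integral_mono_on hw ((hg.mul hcont).intervalIntegrable 0 w)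
      ((continuous_const.mul hcont).intervalIntegrable 0 w)
      fun y hy => mul_le_mul_of_nonneg_right ((hmono hy.2).trans hlt.le) (pfun_nonneg hc₁ y)
  have hsplit : ∫ y in Ioi 0, pfun g c₁ y =
      (∫ y in (0)..w, pfun g c₁ y) + ∫ y in Ioi w, pfun g c₁ y := by
    rw [intervalIntegral.integral_of_le hw, ← setIntegral_union Ioc_disjoint_Ioi_same
      measurableSet_Ioi hcont.integrableOn_Ioc (integrableOn_Ioi_pfun hg hmono hc₁ hgw),
      Ioc_union_Ioi_eq_Ioi hw]
  have hT₀ := mul_le_of_le_one_right hc₁ h₀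
  rw [hsplit, mul_add] at hT₀
  rw [pfun_zero] at hftc
  linarith

end Tail

theorem div_le_min_one_div {t p a b : ℝ} (hp : 0 < p) (ha : 0 < a) (hb : 0 < b)
    (h₁ : a * t ≤ p) (h₂ : b * t ≤ p) : t / p ≤ min (1 / a) (1 / b) :=
  le_min ((div_le_div_iff₀ hp ha).2 (by linarith)) ((div_le_div_iff₀ hp hb).2 (by linarith))

theorem integral_Ioi_pfun_div_le {g : ℝ → ℝ} {c₁ : ℝ} (hg : Continuous g) (hmono : Monotone g)
    (hc₁ : 0 < c₁) (hnorm : ∫ y, pfun g c₁ y = 1) {w : ℝ} (hw : 0 ≤ w) (hgw : 0 < g w) :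
    (∫ y in Ioi w, pfun g c₁ y) / pfun g c₁ w ≤ min (1 / g w) (1 / c₁) := by
  have h₀ : ∫ y in Ioi 0, pfun g c₁ y ≤ 1 :=
    hnorm ▸ setIntegral_le_integral (integrable_of_integral_eq_one hnorm)
      (Eventually.of_forall fun y => pfun_nonneg hc₁.le y)
  exact div_le_min_one_div (pfun_pos hc₁ w) hgw hc₁
    (mul_integral_Ioi_pfun_le hg hmono hc₁.le hgw)
    (const_mul_integral_Ioi_pfun_le hg hmono hc₁.le h₀ hw hgw)

theorem one_sub_Ffun {g : ℝ → ℝ} {c₁ : ℝ} (hnorm : ∫ y, pfun g c₁ y = 1) (w : ℝ) :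
    1 - Ffun g c₁ w = ∫ y in Ioi w, pfun g c₁ y := by
  have hint := integrable_of_integral_eq_one hnorm
  rw [← hnorm, ← intervalIntegral.integral_Iic_add_Ioi hint.integrableOn hint.integrableOn, Ffun]
  ring

theorem div_le_integral_Ioi_pfun {g : ℝ → ℝ} {c₁ c₃ : ℝ} (hg : Differentiable ℝ g)
    (hmono : Monotone g) (hc₁ : 0 ≤ c₁) (hc₃ : 1 ≤ c₃) {w : ℝ} (hgw : 0 < g w)
    (hderiv : ∀ y, w < y → deriv g y ≤ c₃ * (1 + g y)) :
    pfun g c₁ w / (c₃ * (1 + g w)) ≤ ∫ y in Ioi w, pfun g c₁ y := by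
  set q := fun y => pfun g c₁ y * (g y * (1 + g y) + deriv g y) / (c₃ * (1 + g y) ^ 2)
  have hg_pos : ∀ y ∈ Ici w, 0 < g y := fun y hy => hgw.trans_le (hmono hy)
  have hq : ∀ y ∈ Ici w, HasDerivAt (fun y => -(pfun g c₁ y / (c₃ * (1 + g y)))) (q y) y := by
    intro y hy
    have hu : 1 + g y ≠ 0 := by linarith [hg_pos y hy]
    have hc₃' : c₃ ≠ 0 := by linarith
    refine ((hasDerivAt_pfun hg.continuous c₁ y).div
      (((hg y).hasDerivAt.const_add 1).const_mul c₃) (mul_ne_zero hc₃' hu)).neg.congr_deriv ?_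
    simp only [q]
    field_simp
    ring
  have hq_nonneg : ∀ y ∈ Ioi w, 0 ≤ q y := fun y hy => by
    have hgy := hg_pos y (Ioi_subset_Ici_self hy)
    have hg' := hmono.deriv_nonneg (x := y)
    have hp := pfun_nonneg (g := g) hc₁ y
    positivity
  have hq_le : ∀ y ∈ Ioi w, q y ≤ pfun g c₁ y := fun y hy => by
    have hgy := hg_pos y (Ioi_subset_Ici_self hy)
    rw [div_le_iff₀ (by positivity)]
    refine mul_le_mul_of_nonneg_left ?_ (pfun_nonneg hc₁ y)
    nlinarith [hderiv y hy, mul_le_mul_of_nonneg_right hc₃ (by positivity : 0 ≤ g y * (1 + g y))]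
  have hlim : Tendsto (fun y => -(pfun g c₁ y / (c₃ * (1 + g y)))) atTop (𝓝 0) := by
    have hpos : ∀ᶠ y in atTop, 0 < g y := (eventually_ge_atTop w).mono fun y hy => hg_pos y hy
    have := squeeze_zero' (f := fun y => pfun g c₁ y / (c₃ * (1 + g y)))
      (hpos.mono fun y hy => div_nonneg (pfun_nonneg hc₁ y) (by positivity))
      (hpos.mono fun y hy => div_le_self (pfun_nonneg hc₁ y) (by nlinarith [hy, hc₃]))
      (tendsto_pfun_atTop hg.continuous hmono hgw)
    simpa using this.neg
  calc pfun g c₁ w / (c₃ * (1 + g w)) = ∫ y in Ioi w, q y := by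
        rw [integral_Ioi_of_hasDerivAt_of_nonneg' hq hq_nonneg hlim]
        ring
    _ ≤ ∫ y in Ioi w, pfun g c₁ y :=
        setIntegral_mono_on (integrableOn_Ioi_deriv_of_nonneg' hq hq_nonneg hlim)
          (integrableOn_Ioi_pfun hg.continuous hmono hc₁ hgw) measurableSet_Ioi hq_le

section Reflection

variable {g : ℝ → ℝ} {c₁ : ℝ}

theorem Gfun_neg_comp (y : ℝ) : Gfun (fun t => -g (-t)) y = Gfun g (-y) := by
  simp only [Gfun, intervalIntegral.integral_neg, intervalIntegral.integral_comp_neg, neg_zero]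
  rw [intervalIntegral.integral_symm, neg_neg]

theorem pfun_neg_comp (y : ℝ) : pfun (fun t => -g (-t)) c₁ y = pfun g c₁ (-y) := by
  rw [pfun, pfun, Gfun_neg_comp]

theorem integral_pfun_neg_comp : ∫ y, pfun (fun t => -g (-t)) c₁ y = ∫ y, pfun g c₁ y := by
  simp only [pfun_neg_comp]
  exact integral_neg_eq_self _ _

theorem integral_Ioi_pfun_neg_comp (w : ℝ) :
    ∫ y in Ioi w, pfun (fun t => -g (-t)) c₁ y = Ffun g c₁ (-w) := by
  simp only [pfun_neg_comp, integral_comp_neg_Ioi, Ffun]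

end Reflection

namespace GCond

variable {g : ℝ → ℝ} {c₂ c₃ : ℝ}

theorem pos_of_pos (hg : GCond g c₂ c₃) {y : ℝ} (hy : 0 < y) : 0 < g y :=
  pos_of_mul_pos_right (hg.sign y hy.ne') hy.le

theorem neg_of_neg (hg : GCond g c₂ c₃) {y : ℝ} (hy : y < 0) : g y < 0 :=
  neg_of_mul_pos_right (hg.sign y hy.ne) hy.le

theorem deriv_le (hg : GCond g c₂ c₃) {y : ℝ} (hy : 0 < y) : deriv g y ≤ c₃ * (1 + g y) := by
  have hc₃ : 0 ≤ c₃ * (1 + |g y|) := mul_nonneg (by linarith [hg.c₃ge]) (by positivity)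
  calc deriv g y ≤ c₃ * (1 + |g y|) / (1 + |y|) := (le_abs_self _).trans (hg.derivBound y)
    _ ≤ c₃ * (1 + |g y|) := div_le_self hc₃ (by linarith [abs_nonneg y])
    _ = c₃ * (1 + g y) := by rw [abs_of_pos (hg.pos_of_pos hy)]

end GCond

theorem stmt_7 (g : ℝ → ℝ) (c₁ c₂ c₃ : ℝ) (hg : GCond g c₂ c₃)
    (hc₁ : 0 < c₁)
    (hnorm : (∫ y : ℝ, pfun g c₁ y) = 1) :
    (∀ w : ℝ, 0 < w →
      1 / (max 1 c₃ * (1 + g w)) ≤ (1 - Ffun g c₁ w) / pfun g c₁ w ∧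
      (1 - Ffun g c₁ w) / pfun g c₁ w ≤ min (1 / g w) (1 / c₁)) ∧
    (∀ w : ℝ, w < 0 →
      Ffun g c₁ w / pfun g c₁ w ≤ min (1 / |g w|) (1 / c₁)) := by
  have hcont := hg.diff.continuous
  refine ⟨fun w hw => ⟨?_, ?_⟩, fun w hw => ?_⟩
  · have hgw := hg.pos_of_pos hw
    have hden : 0 < c₃ * (1 + g w) := mul_pos (by linarith [hg.c₃ge]) (by linarith)
    rw [max_eq_right hg.c₃ge, one_sub_Ffun hnorm, div_le_div_iff₀ hden (pfun_pos hc₁ w),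
      one_mul, ← div_le_iff₀ hden]
    exact div_le_integral_Ioi_pfun hg.diff hg.mono hc₁.le hg.c₃ge hgw
      fun y hy => hg.deriv_le (hw.trans hy)
  · rw [one_sub_Ffun hnorm]
    exact integral_Ioi_pfun_div_le hcont hg.mono hc₁ hnorm hw.le (hg.pos_of_pos hw)
  · have hgw := hg.neg_of_neg hw
    have := integral_Ioi_pfun_div_le (g := fun t => -g (-t)) (hcont.comp continuous_neg).neg
      (fun a b hab => neg_le_neg (hg.mono (neg_le_neg hab))) hc₁
      (integral_pfun_neg_comp.trans hnorm) (neg_nonneg.2 hw.le) (by simpa using hgw)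
    rwa [integral_Ioi_pfun_neg_comp, pfun_neg_comp, neg_neg, ← abs_of_neg hgw] at this
end

section
/- Assume g satisfies conditions (A1)–(A4), and set μ₁ = max(g(1),|g(−1)|)+1. Then: (i) for all 0 < δ ≤ 1 and all w ∈ ℝ, sup_{|t|≤δ} |g(w+t)| ≤ c₂(|g(w)|+μ₁); (ii) for all w > s > 0 and every a > 1, with m(a) = ⌊log₂(a·c₃+1)⌋+1 and b(a) = ( (2c₂) + (2c₂)² + ⋯ + (2c₂)^{m(a)} ) + 1/a, one has g(w) − g(w−s) ≤ g(w)/a + b(a)·(g(s)+1). -/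
open MeasureTheory Real

lemma doubling_aux (g : ℝ → ℝ) (c₂ : ℝ) (hc₂ : 0 < c₂)
    (subadd : ∀ x y : ℝ, |g (x + y)| ≤ c₂ * (|g x| + |g y| + 1))
    (s : ℝ) (hgs : 0 < g s) :
    ∀ k : ℕ, |g (2 ^ (k + 1) * s)| ≤
      (∑ i ∈ Finset.range (k + 1), (2 * c₂) ^ (i + 1)) * (g s + 1) := by
  intro k
  induction k with
  | zero =>
    have e : (2 : ℝ) ^ 1 * s = s + s := by ring
    rw [e, Finset.sum_range_one]
    have h := subadd s s
    have habs : |g s| = g s := abs_of_pos hgs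
    have e2 : ((2 : ℝ) * c₂) ^ (0 + 1) = 2 * c₂ := by norm_num
    rw [e2]
    nlinarith [h, hc₂, mul_pos hc₂ hgs]
  | succ k ih =>
    have e : (2 : ℝ) ^ (k + 1 + 1) * s = 2 ^ (k + 1) * s + 2 ^ (k + 1) * s := by ring
    rw [e]
    have h := subadd (2 ^ (k + 1) * s) (2 ^ (k + 1) * s)
    have hsum : (∑ i ∈ Finset.range (k + 1 + 1), (2 * c₂) ^ (i + 1))
        = (∑ i ∈ Finset.range (k + 1), (2 * c₂) ^ (i + 1)) * (2 * c₂) + 2 * c₂ := by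
      rw [Finset.sum_range_succ' (fun i => (2 * c₂) ^ (i + 1)) (k + 1)]
      rw [Finset.sum_mul]
      simp [pow_succ]
    rw [hsum]
    have h2 := mul_le_mul_of_nonneg_left ih (by positivity : (0:ℝ) ≤ 2 * c₂)
    nlinarith [h, hc₂, hgs, abs_nonneg (g (2 ^ (k + 1) * s))]

theorem stmt_8 (g : ℝ → ℝ) (c₂ c₃ : ℝ) (hg : GCond g c₂ c₃)
    (μ₁ : ℝ) (hμ₁ : μ₁ = max (g 1) |g (-1)| + 1) :
    (∀ δ : ℝ, 0 < δ → δ ≤ 1 → ∀ w t : ℝ, |t| ≤ δ →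
      |g (w + t)| ≤ c₂ * (|g w| + μ₁)) ∧
    (∀ w s a : ℝ, 0 < s → s < w → 1 < a →
      g w - g (w - s) ≤ g w / a +
        ((∑ i ∈ Finset.range (Nat.floor (Real.logb 2 (a * c₃ + 1)) + 1),
            (2 * c₂) ^ (i + 1)) + 1 / a) * (g s + 1)) := by
  have gpos : ∀ y : ℝ, 0 < y → 0 < g y := by
    intro y hy
    have h := hg.sign y (ne_of_gt hy)
    nlinarith
  constructor
  · -- Part (i)
    intro δ hδ hδ1 w t ht
    have ht1 : |t| ≤ 1 := ht.trans hδ1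
    have ht1' : -1 ≤ t ∧ t ≤ 1 := abs_le.mp ht1
    have h1 : g t ≤ g 1 := hg.mono ht1'.2
    have h2 : g (-1) ≤ g t := hg.mono ht1'.1
    have habs : |g t| ≤ max (g 1) |g (-1)| := by
      rw [abs_le]
      constructor
      · have := neg_abs_le (g (-1))
        have := le_max_right (g 1) |g (-1)|
        linarith
      · exact h1.trans (le_max_left _ _)
    have hsub := hg.subadd w t
    nlinarith [hg.c₂pos, abs_nonneg (g w)]
  · -- Part (ii)
    intro w s a hs hsw ha
    set m : ℕ := Nat.floor (Real.logb 2 (a * c₃ + 1)) + 1 with hm_def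
    set S : ℝ := ∑ i ∈ Finset.range m, (2 * c₂) ^ (i + 1) with hS_def
    have hgs : 0 < g s := gpos s hs
    have hgw : 0 < g w := gpos w (hs.trans hsw)
    have hgws : 0 < g (w - s) := gpos _ (by linarith)
    have hSnn : 0 ≤ S := Finset.sum_nonneg fun i _ => pow_nonneg (by linarith [hg.c₂pos]) _
    have ha0 : 0 < a := by linarith
    have hac : 0 < a * c₃ := by nlinarith [hg.c₃ge]
    -- 2^m > a*c₃ + 1
    have hpow : a * c₃ + 1 < (2 : ℝ) ^ m := by
      have hx : (0 : ℝ) < a * c₃ + 1 := by linarith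
      have h1 : Real.logb 2 (a * c₃ + 1) < (m : ℝ) := by
        have := Nat.lt_floor_add_one (Real.logb 2 (a * c₃ + 1))
        rw [hm_def]
        push_cast
        linarith
      calc a * c₃ + 1 = (2 : ℝ) ^ Real.logb 2 (a * c₃ + 1) :=
            (Real.rpow_logb two_pos (by norm_num) hx).symm
        _ < (2 : ℝ) ^ (m : ℝ) := Real.rpow_lt_rpow_of_exponent_lt one_lt_two h1
        _ = (2 : ℝ) ^ m := by rw [Real.rpow_natCast]
    rcases le_or_gt w (2 ^ m * s) with hcase | hcase
    · -- Case 1 : w ≤ 2^m s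
      have hmono : g w ≤ g (2 ^ m * s) := hg.mono hcase
      have hd := doubling_aux g c₂ hg.c₂pos hg.subadd s hgs (Nat.floor (Real.logb 2 (a * c₃ + 1)))
      have hle : g w ≤ S * (g s + 1) := by
        refine hmono.trans (le_trans (le_abs_self _) ?_)
        rw [hS_def, hm_def]
        exact hd
      have h1a : 0 < 1 / a := by positivity
      nlinarith [hgs, hgws, div_pos hgw ha0]
    · -- Case 2 : w > 2^m s, use MVT
      have hws : w - s < w := by linarith
      obtain ⟨ξ, hξ, hderiv⟩ := exists_deriv_eq_slope g hws
        (hg.diff.continuous.continuousOn) (hg.diff.differentiableOn)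
      have hξ1 : w - s < ξ := hξ.1
      have hξ2 : ξ < w := hξ.2
      have hξpos : 0 < ξ := by linarith
      have hgξpos : 0 < g ξ := gpos ξ hξpos
      have hgξw : g ξ ≤ g w := hg.mono hξ2.le
      have hslope : g w - g (w - s) = deriv g ξ * s := by
        have : w - (w - s) = s := by ring
        rw [this] at hderiv
        field_simp at hderiv
        linarith [hderiv]
      have hdb := hg.derivBound ξ
      rw [abs_of_pos hξpos, abs_of_pos hgξpos] at hdb
      have hderiv_le : deriv g ξ ≤ c₃ * (1 + g w) / (1 + ξ) := by
        refine (le_abs_self _).trans (hdb.trans ?_)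
        gcongr
        all_goals linarith [hg.c₃ge]
      -- key: c₃ * (1 + g w) / (1 + ξ) * s ≤ (1 + g w) / a
      have hm1 : a * c₃ * s ≤ 1 + ξ := by
        have h2m : (2 : ℝ) ^ m * s ≤ w := hcase.le
        have : a * c₃ * s ≤ ((2:ℝ)^m - 1) * s := by nlinarith
        nlinarith
      have hkey : c₃ * (1 + g w) / (1 + ξ) * s ≤ (1 + g w) / a := by
        rw [div_mul_eq_mul_div, div_le_div_iff₀ (by linarith) ha0]
        nlinarith [hgw, hg.c₃ge, mul_le_mul_of_nonneg_left hm1 (by linarith : (0:ℝ) ≤ 1 + g w)]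
      have hfinal : g w - g (w - s) ≤ (1 + g w) / a := by
        rw [hslope]
        calc deriv g ξ * s ≤ c₃ * (1 + g w) / (1 + ξ) * s :=
              mul_le_mul_of_nonneg_right hderiv_le hs.le
          _ ≤ (1 + g w) / a := hkey
      have hrhs : (1 + g w) / a ≤ g w / a + (S + 1 / a) * (g s + 1) := by
        have : (1 + g w) / a = g w / a + 1 / a := by ring
        rw [this]
        nlinarith [hgs, hSnn, div_pos (by norm_num : (0:ℝ) < 1) ha0, mul_pos (div_pos (by norm_num : (0:ℝ) < 1) ha0) hgs]
      linarith
end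

section
/- Assume g satisfies conditions (A1)–(A4). Then for every w ≥ 0 and every a > 0, g'(w) ≤ g(w)/a + c₃·(g(a·c₃)+1) + 1/a. -/
open MeasureTheory Real

namespace GCond

variable {g : ℝ → ℝ} {c₂ c₃ : ℝ}

theorem nonneg_of_nonneg (hg : GCond g c₂ c₃) {y : ℝ} (hy : 0 ≤ y) : 0 ≤ g y := by
  rcases hy.eq_or_lt with rfl | hy
  · exact hg.zero.ge
  · exact (pos_of_mul_pos_right (hg.sign y hy.ne') hy.le).le

theorem c₃_pos (hg : GCond g c₂ c₃) : 0 < c₃ :=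
  zero_lt_one.trans_le hg.c₃ge

theorem deriv_le_of_nonneg (hg : GCond g c₂ c₃) {w : ℝ} (hw : 0 ≤ w) :
    deriv g w ≤ c₃ * (1 + g w) / (1 + w) := by
  have h := hg.derivBound w
  rw [abs_of_nonneg hw, abs_of_nonneg (hg.nonneg_of_nonneg hw)] at h
  exact (le_abs_self _).trans h

end GCond

theorem stmt_9 (g : ℝ → ℝ) (c₂ c₃ : ℝ) (hg : GCond g c₂ c₃) :
    ∀ w a : ℝ, 0 ≤ w → 0 < a →
      deriv g w ≤ g w / a + c₃ * (g (a * c₃) + 1) + 1 / a := by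
  intro w a hw ha
  have hc₃ := hg.c₃_pos
  have hgw := hg.nonneg_of_nonneg hw
  have hgac := hg.nonneg_of_nonneg (mul_pos ha hc₃).le
  have hgw_div : 0 ≤ g w / a := div_nonneg hgw ha.le
  have hinv : 0 < 1 / a := one_div_pos.mpr ha
  refine (hg.deriv_le_of_nonneg hw).trans ?_
  rcases le_or_gt w (a * c₃) with hle | hlt
  · calc c₃ * (1 + g w) / (1 + w)
        ≤ c₃ * (1 + g w) := div_le_self (by positivity) (by linarith)
      _ ≤ c₃ * (g (a * c₃) + 1) :=
          mul_le_mul_of_nonneg_left (by linarith [hg.mono hle]) hc₃.le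
      _ ≤ _ := by linarith
  · calc c₃ * (1 + g w) / (1 + w)
        ≤ c₃ * (1 + g w) / (a * c₃) := by gcongr; linarith
      _ = g w / a + 1 / a := by field_simp; ring
      _ ≤ _ := by linarith [mul_nonneg hc₃.le (by linarith : 0 ≤ g (a * c₃) + 1)]
end

section
/- Let ξ be a random variable with law ρ, where ρ is a probability measure supported in [−L,L]. For s ∈ ℝ define ψₙ(s) = E(ξ·e^{ξ²/(2n)+ξs})/E(e^{ξ²/(2n)+ξs}), ψ_∞(s) = E(ξe^{ξs})/E(e^{ξs}), φₙ(s) = E(ξ²·e^{ξ²/(2n)+ξs})/E(e^{ξ²/(2n)+ξs}), and φ_∞(s) = E(ξ²e^{ξs})/E(e^{ξs}). Let X = (X₁,…,Xₙ) follow the general Curie–Weiss model CW(ρ) at β=1, m = (X₁+⋯+Xₙ)/n and mᵢ = (1/n)Σ_{j≠i} Xⱼ. Then there is a constant C > 0 depending only on L such that for each 1 ≤ i ≤ n, almost surely |ψ_∞(m) − ψₙ(mᵢ)| ≤ C/n and |φ_∞(m) − φₙ(mᵢ)| ≤ C/n. -/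
open MeasureTheory Real

/-- The Gibbs measure of the general Curie–Weiss model `CW(ρ)` at inverse
temperature `β = 1`. -/
noncomputable def cwMeasure (ρ : Measure ℝ) [IsProbabilityMeasure ρ] (n : ℕ) :
    Measure (Fin n → ℝ) :=
  (Measure.pi fun _ : Fin n => ρ).withDensity fun x =>
    ENNReal.ofReal (Real.exp ((∑ i, x i) ^ 2 / (2 * n)) /
      ∫ y : Fin n → ℝ, Real.exp ((∑ i, y i) ^ 2 / (2 * n))
        ∂(Measure.pi fun _ : Fin n => ρ))

/-- `ψₙ(s) = E(ξ e^{ξ²/(2n)+ξs}) / E(e^{ξ²/(2n)+ξs})`. -/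
noncomputable def psiN (ρ : Measure ℝ) (n : ℕ) (s : ℝ) : ℝ :=
  (∫ x, x * Real.exp (x ^ 2 / (2 * n) + x * s) ∂ρ) /
    (∫ x, Real.exp (x ^ 2 / (2 * n) + x * s) ∂ρ)

/-- `ψ_∞(s) = E(ξ e^{ξs}) / E(e^{ξs})`. -/
noncomputable def psiInf (ρ : Measure ℝ) (s : ℝ) : ℝ :=
  (∫ x, x * Real.exp (x * s) ∂ρ) / (∫ x, Real.exp (x * s) ∂ρ)

/-- `φₙ(s) = E(ξ² e^{ξ²/(2n)+ξs}) / E(e^{ξ²/(2n)+ξs})`. -/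
noncomputable def phiN (ρ : Measure ℝ) (n : ℕ) (s : ℝ) : ℝ :=
  (∫ x, x ^ 2 * Real.exp (x ^ 2 / (2 * n) + x * s) ∂ρ) /
    (∫ x, Real.exp (x ^ 2 / (2 * n) + x * s) ∂ρ)

/-- `φ_∞(s) = E(ξ² e^{ξs}) / E(e^{ξs})`. -/
noncomputable def phiInf (ρ : Measure ℝ) (s : ℝ) : ℝ :=
  (∫ x, x ^ 2 * Real.exp (x * s) ∂ρ) / (∫ x, Real.exp (x * s) ∂ρ)

/-!
On the event that every spin lies in `[-L, L]`, both `m` and `mᵢ` lie in `[-L, L]` and differ by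
`Xᵢ / n`. Each of the four functions is a tilted mean `∫ w e^f dρ / ∫ e^f dρ`, and the exponents
`x m` and `x² / (2n) + x mᵢ` are bounded by `K = 3L²/2` on `[-L, L]` and differ there by at most
`K / n`. Since `exp` is `e^K`-Lipschitz below `K` and both denominators are at least `e^{-K}`,
the two tilted means differ by `O(1/n)`, uniformly in `ρ`.
-/

open Finset

lemma abs_exp_sub_exp_le {a b K : ℝ} (ha : a ≤ K) (hb : b ≤ K) :
    |exp a - exp b| ≤ exp K * |a - b| := by
  wlog hab : a ≤ b generalizing a b
  · rw [abs_sub_comm, abs_sub_comm a]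
    exact this hb ha (le_of_not_ge hab)
  -- `exp a = exp b * exp (a - b) ≥ exp b * (1 + (a - b))`
  have hkey : exp b - exp a ≤ exp b * (b - a) := by
    have h := add_one_le_exp (a - b)
    have hsplit : exp a = exp b * exp (a - b) := by rw [← exp_add]; ring_nf
    nlinarith [exp_pos b]
  rw [abs_sub_comm, abs_of_nonneg (sub_nonneg.2 (exp_le_exp.2 hab)), abs_sub_comm,
    abs_of_nonneg (sub_nonneg.2 hab)]
  exact hkey.trans (mul_le_mul_of_nonneg_right (exp_le_exp.2 hb) (sub_nonneg.2 hab))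

lemma abs_div_sub_div_le {A A' B B' b : ℝ} (hb : 0 < b) (hB : b ≤ B) (hB' : b ≤ B') :
    |A / B - A' / B'| ≤ |A - A'| / b + |A'| * |B - B'| / b ^ 2 := by
  have hB0 : 0 < B := hb.trans_le hB
  have hB'0 : 0 < B' := hb.trans_le hB'
  have hsplit : A / B - A' / B' = (A - A') / B + A' * (B' - B) / (B * B') := by
    field_simp; ring
  rw [hsplit]
  refine (abs_add_le _ _).trans (add_le_add ?_ ?_)
  · rw [abs_div, abs_of_pos hB0]
    exact div_le_div_of_nonneg_left (abs_nonneg _) hb hB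
  · rw [abs_div, abs_mul, abs_of_pos (mul_pos hB0 hB'0), sq, abs_sub_comm B']
    exact div_le_div_of_nonneg_left (by positivity) (mul_pos hb hb)
      (mul_le_mul hB hB' hb.le hB0.le)

section TiltedMean

variable {α : Type*} [MeasurableSpace α] {μ : Measure α} [IsProbabilityMeasure μ]

lemma abs_integral_le_of_ae_abs_le {f : α → ℝ} {C : ℝ} (h : ∀ᵐ x ∂μ, |f x| ≤ C) :
    |∫ x, f x ∂μ| ≤ C := by
  simpa using norm_integral_le_of_norm_le_const (μ := μ) (f := f) (by simpa using h)

lemma le_integral_of_ae_le {f : α → ℝ} {c : ℝ} (hf : Integrable f μ) (h : ∀ᵐ x ∂μ, c ≤ f x) :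
    c ≤ ∫ x, f x ∂μ := by
  simpa using integral_mono_ae (integrable_const c) hf h

variable (μ) in
/-- The mean of `w` under `μ` tilted by `exp ∘ f`; `psiInf`, `psiN`, `phiInf` and `phiN` unfold
to instances of it. -/
noncomputable def tiltedMean (w f : α → ℝ) : ℝ :=
  (∫ x, w x * exp (f x) ∂μ) / ∫ x, exp (f x) ∂μ

lemma abs_tiltedMean_sub_le {w f g : α → ℝ} {W K δ : ℝ}
    (hw : Measurable w) (hf : Measurable f) (hg : Measurable g)
    (hwW : ∀ᵐ x ∂μ, |w x| ≤ W) (hfK : ∀ᵐ x ∂μ, |f x| ≤ K) (hgK : ∀ᵐ x ∂μ, |g x| ≤ K)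
    (hfg : ∀ᵐ x ∂μ, |f x - g x| ≤ δ) :
    |tiltedMean μ w f - tiltedMean μ w g| ≤ W * δ * (exp K ^ 2 + exp K ^ 4) := by
  have hW : 0 ≤ W := hwW.exists.elim fun x hx => (abs_nonneg _).trans hx
  have hexp_le {h : α → ℝ} (hK : ∀ᵐ x ∂μ, |h x| ≤ K) : ∀ᵐ x ∂μ, |exp (h x)| ≤ exp K :=
    hK.mono fun x hx => by rw [abs_exp]; exact exp_le_exp.2 (abs_le.1 hx).2
  have hwexp_le {h : α → ℝ} (hK : ∀ᵐ x ∂μ, |h x| ≤ K) :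
      ∀ᵐ x ∂μ, |w x * exp (h x)| ≤ W * exp K := by
    filter_upwards [hwW, hexp_le hK] with x hwx hex
    rw [abs_mul]
    exact mul_le_mul hwx hex (abs_nonneg _) ((abs_nonneg _).trans hwx)
  have hint {h : α → ℝ} {C : ℝ} (hh : Measurable h) (hC : ∀ᵐ x ∂μ, |h x| ≤ C) :
      Integrable h μ :=
    .of_bound hh.aestronglyMeasurable C (by simpa using hC)
  have hden_ge {h : α → ℝ} (hh : Measurable h) (hK : ∀ᵐ x ∂μ, |h x| ≤ K) :
      exp (-K) ≤ ∫ x, exp (h x) ∂μ :=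
    le_integral_of_ae_le (hint hh.exp (hexp_le hK))
      (hK.mono fun x hx => exp_le_exp.2 (abs_le.1 hx).1)
  have hexp_sub : ∀ᵐ x ∂μ, |exp (f x) - exp (g x)| ≤ exp K * δ := by
    filter_upwards [hfK, hgK, hfg] with x hfx hgx hfgx
    exact (abs_exp_sub_exp_le (abs_le.1 hfx).2 (abs_le.1 hgx).2).trans
      (mul_le_mul_of_nonneg_left hfgx (exp_pos K).le)
  have hnum : |(∫ x, w x * exp (f x) ∂μ) - ∫ x, w x * exp (g x) ∂μ| ≤ W * (exp K * δ) := by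
    rw [← integral_sub (hint (h := fun x => w x * exp (f x)) (hw.mul hf.exp) (hwexp_le hfK))
      (hint (h := fun x => w x * exp (g x)) (hw.mul hg.exp) (hwexp_le hgK))]
    refine abs_integral_le_of_ae_abs_le ?_
    filter_upwards [hwW, hexp_sub] with x hwx hx
    rw [← mul_sub, abs_mul]
    exact mul_le_mul hwx hx (abs_nonneg _) ((abs_nonneg _).trans hwx)
  have hden : |(∫ x, exp (f x) ∂μ) - ∫ x, exp (g x) ∂μ| ≤ exp K * δ := by
    rw [← integral_sub (hint hf.exp (hexp_le hfK)) (hint hg.exp (hexp_le hgK))]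
    exact abs_integral_le_of_ae_abs_le hexp_sub
  calc |tiltedMean μ w f - tiltedMean μ w g|
      ≤ W * (exp K * δ) / exp (-K) + W * exp K * (exp K * δ) / exp (-K) ^ 2 := by
        refine (abs_div_sub_div_le (exp_pos _) (hden_ge hf hfK) (hden_ge hg hgK)).trans ?_
        gcongr
        · exact abs_integral_le_of_ae_abs_le (hwexp_le hgK)
    _ = W * δ * (exp K ^ 2 + exp K ^ 4) := by
        rw [exp_neg]
        field_simp

end TiltedMean

lemma abs_tiltedMean_linear_sub_quadratic_le {ρ : Measure ℝ} [IsProbabilityMeasure ρ] {L W : ℝ}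
    (hρ : ∀ᵐ x ∂ρ, x ∈ Set.Icc (-L) L) {w : ℝ → ℝ} (hw : Measurable w)
    (hwW : ∀ x ∈ Set.Icc (-L) L, |w x| ≤ W) {n : ℕ} (hn : 1 ≤ n) {s t : ℝ}
    (hs : |s| ≤ L) (ht : |t| ≤ L) (hst : |s - t| ≤ L / n) :
    |tiltedMean ρ w (· * s) - tiltedMean ρ w (fun x => x ^ 2 / (2 * n) + x * t)|
      ≤ W * (3 / 2 * L ^ 2) * (exp (3 / 2 * L ^ 2) ^ 2 + exp (3 / 2 * L ^ 2) ^ 4) / n := by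
  have hn' : (1 : ℝ) ≤ n := by exact_mod_cast hn
  have hn0 : (0 : ℝ) < n := by linarith
  have hL : 0 ≤ L := (abs_nonneg s).trans hs
  have hmul {x y : ℝ} (hx : |x| ≤ L) (hy : |y| ≤ L) : |x * y| ≤ L ^ 2 := by
    rw [abs_mul, sq]; exact mul_le_mul hx hy (abs_nonneg _) hL
  have hquad {x : ℝ} (hx : |x| ≤ L) : |x ^ 2 / (2 * n)| ≤ L ^ 2 / (2 * n) := by
    have hx2 : x ^ 2 ≤ L ^ 2 := by nlinarith [abs_nonneg x, sq_abs x]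
    rw [abs_div, abs_of_nonneg (sq_nonneg x), abs_of_pos (by positivity : (0 : ℝ) < 2 * n)]
    gcongr
  have hquad' {x : ℝ} (hx : |x| ≤ L) : |x ^ 2 / (2 * n)| ≤ L ^ 2 / 2 :=
    (hquad hx).trans (div_le_div_of_nonneg_left (sq_nonneg L) two_pos (by linarith))
  refine (abs_tiltedMean_sub_le (f := (· * s)) (g := fun x => x ^ 2 / (2 * n) + x * t)
    (K := 3 / 2 * L ^ 2) (δ := 3 / 2 * L ^ 2 / n) hw (by fun_prop) (by fun_prop)
    (hρ.mono hwW) (hρ.mono fun x hx => ?_) (hρ.mono fun x hx => ?_)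
    (hρ.mono fun x hx => ?_)).trans_eq (by ring)
  · linarith [hmul (abs_le.2 hx) hs, sq_nonneg L]
  · linarith [abs_add_le (x ^ 2 / (2 * n)) (x * t), hmul (abs_le.2 hx) ht, hquad' (abs_le.2 hx)]
  · have hsplit : x * s - (x ^ 2 / (2 * n) + x * t) = x * (s - t) - x ^ 2 / (2 * n) := by ring
    have hlin : |x * (s - t)| ≤ L * (L / n) := by
      rw [abs_mul]; exact mul_le_mul (abs_le.2 hx) hst (abs_nonneg _) hL
    have hsum : L * (L / n) + L ^ 2 / (2 * n) = 3 / 2 * L ^ 2 / n := by field_simp; ring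
    rw [hsplit]
    linarith [abs_sub (x * (s - t)) (x ^ 2 / (2 * n)), hquad (abs_le.2 hx)]

lemma ae_cwMeasure_forall {ρ : Measure ℝ} [IsProbabilityMeasure ρ] {p : ℝ → Prop}
    (hp : ∀ᵐ y ∂ρ, p y) (n : ℕ) : ∀ᵐ x ∂cwMeasure ρ n, ∀ j, p (x j) :=
  (withDensity_absolutelyContinuous _ _).ae_le
    (ae_all_iff.2 fun _ => Measure.tendsto_eval_ae_ae.eventually hp)

lemma abs_sum_div_le {n : ℕ} {L : ℝ} {x : Fin n → ℝ} (hx : ∀ j, |x j| ≤ L) (hL : 0 ≤ L)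
    (S : Finset (Fin n)) : |(∑ j ∈ S, x j) / n| ≤ L := by
  rcases Nat.eq_zero_or_pos n with rfl | hn
  · simpa using hL
  have hn' : (0 : ℝ) < n := by exact_mod_cast hn
  rw [abs_div, Nat.abs_cast, div_le_iff₀ hn']
  calc |∑ j ∈ S, x j| ≤ ∑ j ∈ S, |x j| := abs_sum_le_sum_abs _ _
    _ ≤ S.card • L := sum_le_card_nsmul _ _ _ fun j _ => hx j
    _ ≤ L * n := by
        rw [nsmul_eq_mul, mul_comm]
        gcongr
        simpa using S.card_le_univ

lemma abs_sum_div_sub_sum_erase_div_le {n : ℕ} {L : ℝ} {x : Fin n → ℝ} (hx : ∀ j, |x j| ≤ L)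
    (i : Fin n) : |(∑ j, x j) / n - (∑ j ∈ univ.erase i, x j) / n| ≤ L / n := by
  rw [← add_sum_erase univ x (mem_univ i), ← sub_div, add_sub_cancel_right, abs_div,
    Nat.abs_cast]
  gcongr
  exact hx i

theorem stmt_17 (L : ℝ) (hL0 : 0 < L) :
    ∃ C : ℝ, 0 < C ∧
      ∀ (ρ : Measure ℝ) [IsProbabilityMeasure ρ], ρ (Set.Icc (-L) L) = 1 →
        ∀ n : ℕ, 1 ≤ n → ∀ i : Fin n,
          ∀ᵐ x ∂cwMeasure ρ n,
            |psiInf ρ ((∑ j, x j) / n) - psiN ρ n ((∑ j ∈ Finset.univ.erase i, x j) / n)|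
                ≤ C / n ∧
              |phiInf ρ ((∑ j, x j) / n) - phiN ρ n ((∑ j ∈ Finset.univ.erase i, x j) / n)|
                ≤ C / n := by
  refine ⟨max L (L ^ 2) * (3 / 2 * L ^ 2) * (exp (3 / 2 * L ^ 2) ^ 2 + exp (3 / 2 * L ^ 2) ^ 4),
    by positivity, fun ρ _ hρ n hn i => ?_⟩
  have hsupp : ∀ᵐ y ∂ρ, y ∈ Set.Icc (-L) L :=
    mem_ae_iff.2 ((prob_compl_eq_zero_iff measurableSet_Icc).2 hρ)
  filter_upwards [ae_cwMeasure_forall hsupp n] with x hx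
  have hx' : ∀ j, |x j| ≤ L := fun j => abs_le.2 (hx j)
  have hm := abs_sum_div_le hx' hL0.le univ
  have hmi := abs_sum_div_le hx' hL0.le (univ.erase i)
  have hdiff := abs_sum_div_sub_sum_erase_div_le hx' i
  refine ⟨abs_tiltedMean_linear_sub_quadratic_le (w := fun y => y) hsupp (by fun_prop) (fun y hy => ?_)
      hn hm hmi hdiff,
    abs_tiltedMean_linear_sub_quadratic_le (w := fun y => y ^ 2) hsupp (by fun_prop) (fun y hy => ?_)
      hn hm hmi hdiff⟩
  · exact (abs_le.2 hy).trans (le_max_left _ _)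
  · rw [abs_of_nonneg (sq_nonneg y)]
    exact (sq_le_sq' hy.1 hy.2).trans (le_max_right _ _)
end
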